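/- arXiv:0811.3517 — 3 statements merged into one kernel-verified Lean document; each statement's English description precedes it below -/
import Mathlib

section
/- Let H̃ ≅ H ⊗ R be a minimal model with dim_k H nonzero and finite. If the action of the exterior algebra Λ on H is trivial, i.e. the terms of the boundary d̄ that are linear in the t_i vanish, then the number of degrees q with H^q ≠ 0 is at least ℓ(F_*(H̃)). -/
/-!
Statement 11 (Proposition 3.2(f)): let `H̃ ≅ H ⊗ R` be a minimal model with `dim_k H`
nonzero and finite.  If the action of the exterior algebra `Λ` on `H` is trivial, i.e. the
terms of the boundary `d̄` that are linear in the `tᵢ` vanish (all `λᵢ = 0`), then the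
number of degrees `q` with `H^q ≠ 0` is at least `ℓ(F_*(H̃))`.
-/


open MvPolynomial TensorProduct

/-- `R = k[t₁,…,t_r]`, graded with `deg tᵢ = 1`. -/
abbrev Rp (k : Type*) [Field k] (r : ℕ) := MvPolynomial (Fin r) k

variable (k : Type*) [Field k] (r : ℕ)
variable (H : Type*) [AddCommGroup H] [Module k H]

/-- `x ↦ 1 ⊗ x : H → R ⊗ H`. -/
noncomputable def toT : H →ₗ[k] Rp k r ⊗[k] H := TensorProduct.mk k (Rp k r) H 1

/-- The augmentation `R → k`, `tᵢ ↦ 0`. -/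
noncomputable def εR : Rp k r →ₗ[k] k := (aeval fun _ : Fin r => (0 : k)).toLinearMap

/-- The degree-`n` graded piece of `H̃ = R ⊗ₖ H` (`deg tᵢ = 1`), where `g` is the grading
of `H`: it is spanned by the tensors `q ⊗ x` with `q` homogeneous of degree `d`, `x ∈ H^j`
and `d + j = n`. -/
noncomputable def gradedPiece (g : ℤ → Submodule k H) (n : ℤ) :
    Submodule k (Rp k r ⊗[k] H) :=
  Submodule.span k {z | ∃ (d : ℕ) (j : ℤ) (q : Rp k r) (x : H),
    q ∈ homogeneousSubmodule (Fin r) k d ∧ x ∈ g j ∧ (d : ℤ) + j = n ∧ z = q ⊗ₜ[k] x}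

/-- The boundary `d̄` has total degree `1`. -/
def DegreeOne (g : ℤ → Submodule k H)
    (D : Rp k r ⊗[k] H →ₗ[Rp k r] Rp k r ⊗[k] H) : Prop :=
  ∀ (n : ℤ), ∀ z ∈ gradedPiece k r H g n, D z ∈ gradedPiece k r H g (n + 1)

/-- The constant part of the boundary vanishes (`d̄ ⊗_R k = 0`), i.e. the complex is
minimal. -/
def MinimalB (D : Rp k r ⊗[k] H →ₗ[Rp k r] Rp k r ⊗[k] H) : Prop :=
  ∀ z : Rp k r ⊗[k] H, LinearMap.rTensor H (εR k r) (D z) = 0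

/-- The `k`-linear extraction of the coefficient of `tᵢ`. -/
noncomputable def lcoeffR (i : Fin r) : Rp k r →ₗ[k] k where
  toFun q := coeff (Finsupp.single i 1) q
  map_add' p q := coeff_add _ p q
  map_smul' c p := coeff_smul _ c p

/-- `λᵢ : H → H`, the coefficient of `tᵢ` in `d̄(x)` (the linear part of the boundary). -/
noncomputable def lam (D : Rp k r ⊗[k] H →ₗ[Rp k r] Rp k r ⊗[k] H) (i : Fin r) :
    H →ₗ[k] H :=
  (TensorProduct.lid k H).toLinearMap ∘ₗ LinearMap.rTensor H (lcoeffR k r i) ∘ₗ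
    (D.restrictScalars k) ∘ₗ toT k r H

/-- The filtration `F_*` of Definition 3.1: `F₀(H) = 0` and
`F_{i+1}(H) = d̄⁻¹(F_i(H) ⊗ R) ∩ (H ⊗ k)`; `F_i(H̃) = F_i(H) ⊗ R` is its base change. -/
noncomputable def FH (D : Rp k r ⊗[k] H →ₗ[Rp k r] Rp k r ⊗[k] H) :
    ℕ → Submodule k H
  | 0 => ⊥
  | i + 1 =>
    Submodule.comap ((D.restrictScalars k) ∘ₗ toT k r H)
      (Submodule.restrictScalars k ((FH D i).baseChange (Rp k r)))

/-- The length `ℓ(F_*(H̃))` of the filtration: the smallest `i` with `F_i = F_{i+1}`. -/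
noncomputable def flen (D : Rp k r ⊗[k] H →ₗ[Rp k r] Rp k r ⊗[k] H) : ℕ :=
  sInf {i | FH k r H D i = FH k r H D (i + 1)}

/-- `(Λ⁺)^i H^q`: the iterates of the exterior-algebra action of `λ₁,…,λ_r` on `H^q`. -/
noncomputable def LPow (g : ℤ → Submodule k H)
    (D : Rp k r ⊗[k] H →ₗ[Rp k r] Rp k r ⊗[k] H) (q : ℤ) : ℕ → Submodule k H
  | 0 => g q
  | i + 1 => ⨆ j : Fin r, (LPow g D q i).map (lam k r H D j)

/-- `ℓ_Λ(H^q)`: the least `i` with `(Λ⁺)^i H^q = 0`. -/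
noncomputable def llen (g : ℤ → Submodule k H)
    (D : Rp k r ⊗[k] H →ₗ[Rp k r] Rp k r ⊗[k] H) (q : ℤ) : ℕ :=
  sInf {i | LPow k r H g D q i = ⊥}

/-!
A class `x ∈ H^q` has `d̄ x` of degree `q + 1`; minimality kills its constant coefficient and
the vanishing of the `λᵢ` its linear ones, so every surviving coefficient sits in front of a
monomial of degree `≥ 2` and hence lies in some `H^j` with `j < q`. Thus `H^q ⊆ F_{N+1}` as soon
as all lower nonzero degrees lie in `F_N`, and going up through the nonzero degrees one at a
time gives `F_s = H` for `s` the number of nonzero degrees. Then `F_s = F_{s+1}`, so `ℓ ≤ s`.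
-/

section Lattice

variable {α ι : Type*} [CompleteLattice α] [LinearOrder ι] {F : ℕ → α} {g : ι → α}

theorem le_of_ncard_lt_of_forall_lt_le (hfin : {q | g q ≠ ⊥}.Finite)
    (hstep : ∀ N q, (∀ j < q, g j ≤ F N) → g q ≤ F (N + 1)) {n : ℕ} {q : ι}
    (hq : {p | g p ≠ ⊥ ∧ p < q}.ncard < n) : g q ≤ F n := by
  induction n generalizing q with
  | zero => simp at hq
  | succ n ih =>
    refine hstep n q fun j hjq => ?_
    by_cases hj : g j = ⊥
    · exact hj.le.trans bot_le
    have hlt : {p | g p ≠ ⊥ ∧ p < j}.ncard < {p | g p ≠ ⊥ ∧ p < q}.ncard := by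
      refine Set.ncard_lt_ncard ?_ (hfin.subset fun p hp => hp.1)
      have hsub : {p | g p ≠ ⊥ ∧ p < j} ⊆ {p | g p ≠ ⊥ ∧ p < q} :=
        fun p hp => ⟨hp.1, hp.2.trans hjq⟩
      exact (Set.ssubset_iff_of_subset hsub).mpr ⟨j, ⟨hj, hjq⟩, fun h => lt_irrefl j h.2⟩
    exact ih (by omega)

theorem iSup_le_of_forall_lt_le (hfin : {q | g q ≠ ⊥}.Finite)
    (hstep : ∀ N q, (∀ j < q, g j ≤ F N) → g q ≤ F (N + 1)) :
    ⨆ q, g q ≤ F {q | g q ≠ ⊥}.ncard := by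
  refine iSup_le fun q => ?_
  by_cases hq : g q = ⊥
  · exact hq.le.trans bot_le
  refine le_of_ncard_lt_of_forall_lt_le hfin hstep (Set.ncard_lt_ncard ?_ hfin)
  have hsub : {p | g p ≠ ⊥ ∧ p < q} ⊆ {p | g p ≠ ⊥} := fun p hp => hp.1
  exact (Set.ssubset_iff_of_subset hsub).mpr ⟨q, hq, fun h => lt_irrefl q h.2⟩

end Lattice

namespace MvPolynomial

variable {σ R M : Type*} [CommSemiring R] [AddCommMonoid M] [Module R M]

noncomputable def coeffTensor (m : σ →₀ ℕ) : MvPolynomial σ R ⊗[R] M →ₗ[R] M :=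
  (TensorProduct.lid R M).toLinearMap ∘ₗ LinearMap.rTensor M (lcoeff R m)

@[simp]
theorem coeffTensor_tmul (m : σ →₀ ℕ) (p : MvPolynomial σ R) (x : M) :
    coeffTensor m (p ⊗ₜ[R] x) = coeff m p • x := by
  simp [coeffTensor]

open scoped Classical in
variable (σ R M) in
noncomputable def tensorEquivFinsupp : MvPolynomial σ R ⊗[R] M ≃ₗ[R] ((σ →₀ ℕ) →₀ M) :=
  (TensorProduct.congr (basisMonomials σ R).repr (LinearEquiv.refl R M)).trans
    (TensorProduct.finsuppScalarLeft R M (σ →₀ ℕ))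

theorem tensorEquivFinsupp_apply (z : MvPolynomial σ R ⊗[R] M) (m : σ →₀ ℕ) :
    tensorEquivFinsupp σ R M z m = coeffTensor m z := by
  induction z using TensorProduct.induction_on with
  | zero => simp
  | tmul p x => simp [tensorEquivFinsupp, basisMonomials, coeff]
  | add a b ha hb => simp [map_add, ha, hb]

theorem tensorEquivFinsupp_symm_single (m : σ →₀ ℕ) (x : M) :
    (tensorEquivFinsupp σ R M).symm (Finsupp.single m x) = monomial m 1 ⊗ₜ[R] x := by
  simp [tensorEquivFinsupp, basisMonomials, monomial]

theorem mem_baseChange_of_forall_coeffTensor_mem {N : Submodule R M}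
    {z : MvPolynomial σ R ⊗[R] M} (h : ∀ m, coeffTensor m z ∈ N) :
    z ∈ N.baseChange (MvPolynomial σ R) := by
  set e := tensorEquivFinsupp σ R M
  have hz : z = (e z).sum fun m x => monomial m 1 ⊗ₜ[R] x := by
    conv_lhs => rw [← e.symm_apply_apply z, ← Finsupp.sum_single (e z), map_finsuppSum]
    simp only [e, tensorEquivFinsupp_symm_single]
  rw [hz]
  exact Submodule.sum_mem _ fun m _ =>
    Submodule.tmul_mem_baseChange_of_mem _ (tensorEquivFinsupp_apply z m ▸ h m)

end MvPolynomial

theorem Finsupp.exists_eq_single_of_degree_eq_one {σ : Type*} [DecidableEq σ] {m : σ →₀ ℕ}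
    (h : m.degree = 1) : ∃ i, m = Finsupp.single i 1 := by
  obtain ⟨i, hi⟩ := Multiset.card_eq_one.mp ((Finsupp.card_toMultiset m).trans h)
  exact ⟨i, by simpa [hi] using (Finsupp.toMultiset_toFinsupp m).symm⟩

section MinimalModel

variable {k r H} {g : ℤ → Submodule k H} {D : Rp k r ⊗[k] H →ₗ[Rp k r] Rp k r ⊗[k] H}

theorem toT_mem_gradedPiece {q : ℤ} {x : H} (hx : x ∈ g q) :
    toT k r H x ∈ gradedPiece k r H g q :=
  Submodule.subset_span ⟨0, q, 1, x, isHomogeneous_one _ _, hx, by simp, rfl⟩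

theorem coeffTensor_mem_of_mem_gradedPiece {n : ℤ} {z : Rp k r ⊗[k] H}
    (hz : z ∈ gradedPiece k r H g n) (m : Fin r →₀ ℕ) :
    coeffTensor m z ∈ g (n - m.degree) := by
  induction hz using Submodule.span_induction with
  | mem w hw =>
    obtain ⟨d, j, q, x, hq, hx, rfl, rfl⟩ := hw
    rw [coeffTensor_tmul]
    by_cases hc : coeff m q = 0
    · simp [hc]
    · have hm : m.degree = d := by rw [Finsupp.degree_eq_weight_one]; exact hq hc
      simpa [hm] using Submodule.smul_mem _ _ hx
  | zero => simp
  | add a b _ _ ha hb => rw [map_add]; exact add_mem ha hb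
  | smul c a _ ha => rw [map_smul]; exact Submodule.smul_mem _ _ ha

theorem MinimalB.coeffTensor_zero_eq_zero (hmin : MinimalB k r H D) (z : Rp k r ⊗[k] H) :
    coeffTensor 0 (D z) = 0 := by
  have hε : εR k r = lcoeff k 0 := by
    ext p
    simp [εR, constantCoeff_eq]
  simpa [coeffTensor, hε] using congrArg (TensorProduct.lid k H) (hmin z)

theorem coeffTensor_single_eq_lam (i : Fin r) (x : H) :
    coeffTensor (Finsupp.single i 1) (D (toT k r H x)) = lam k r H D i x :=
  rfl

theorem mem_FH_succ_of_forall_coeffTensor_mem {i : ℕ} {x : H}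
    (h : ∀ m, coeffTensor m (D (toT k r H x)) ∈ FH k r H D i) : x ∈ FH k r H D (i + 1) :=
  mem_baseChange_of_forall_coeffTensor_mem h

theorem FH_succ_eq_top {i : ℕ} (h : FH k r H D i = ⊤) : FH k r H D (i + 1) = ⊤ := by
  simp [FH, h]

theorem flen_le_of_FH_eq_top {i : ℕ} (h : FH k r H D i = ⊤) : flen k r H D ≤ i :=
  Nat.sInf_le (by simp [h, FH_succ_eq_top h])

theorem le_FH_succ_of_forall_lt_le (hdeg : DegreeOne k r H g D) (hmin : MinimalB k r H D)
    (htriv : ∀ i : Fin r, lam k r H D i = 0) {N : ℕ} {q : ℤ}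
    (hlow : ∀ j < q, g j ≤ FH k r H D N) : g q ≤ FH k r H D (N + 1) := by
  intro x hx
  refine mem_FH_succ_of_forall_coeffTensor_mem fun m => ?_
  rcases Nat.lt_or_ge m.degree 2 with hm | hm
  · obtain hm0 | hm1 : m.degree = 0 ∨ m.degree = 1 := by omega
    · rw [(Finsupp.degree_eq_zero_iff m).mp hm0, hmin.coeffTensor_zero_eq_zero]
      exact zero_mem _
    · obtain ⟨i, rfl⟩ := Finsupp.exists_eq_single_of_degree_eq_one hm1
      rw [coeffTensor_single_eq_lam, htriv i, LinearMap.zero_apply]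
      exact zero_mem _
  · refine hlow _ ?_ (coeffTensor_mem_of_mem_gradedPiece (hdeg q _ (toT_mem_gradedPiece hx)) m)
    omega

end MinimalModel

theorem statement11_general (k : Type*) [Field k] (r : ℕ)
    (H : Type*) [AddCommGroup H] [Module k H]
    [FiniteDimensional k H]
    (g : ℤ → Submodule k H) (hg : DirectSum.IsInternal g)
    (D : Rp k r ⊗[k] H →ₗ[Rp k r] Rp k r ⊗[k] H)
    (hdeg : DegreeOne k r H g D) (hmin : MinimalB k r H D)
    (htriv : ∀ i : Fin r, lam k r H D i = 0) :
    flen k r H D ≤ Set.ncard {q : ℤ | g q ≠ ⊥} := by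
  have hfin : {q | g q ≠ ⊥}.Finite :=
    WellFoundedGT.finite_ne_bot_of_iSupIndep hg.submodule_iSupIndep
  refine flen_le_of_FH_eq_top (top_unique ?_)
  rw [← hg.submodule_iSup_eq_top]
  exact iSup_le_of_forall_lt_le hfin fun N q => le_FH_succ_of_forall_lt_le hdeg hmin htriv

theorem statement11 (k : Type*) [Field k] (r : ℕ)
    (H : Type*) [AddCommGroup H] [Module k H]
    [FiniteDimensional k H] [Nontrivial H]
    (g : ℤ → Submodule k H) (hg : DirectSum.IsInternal g)
    (D : Rp k r ⊗[k] H →ₗ[Rp k r] Rp k r ⊗[k] H)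
    (hDD : D ∘ₗ D = 0) (hdeg : DegreeOne k r H g D) (hmin : MinimalB k r H D)
    (htriv : ∀ i : Fin r, lam k r H D i = 0) :
    flen k r H D ≤ Set.ncard {q : ℤ | g q ≠ ⊥} :=
  statement11_general k r H g hg D hdeg hmin htriv
end

section
/- Let H̃ ≅ H ⊗ R be a minimal model with dim_k H nonzero and finite. Then dim_k H ≥ 2(ℓ(F_*(H̃)) − 1). -/
/-!
The filtration `F_i` is increasing and, once two consecutive terms agree, constant; so
`F_0 < F_1 < ⋯ < F_ℓ ⊆ H`. The point is that `F_{j+1} ⊂ F_{j+2}` can never be a jump of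
dimension one unless `F_{j+2} = F_{j+3}`. Indeed, if `F_{j+2} = F_{j+1} + k x` and
`y ∈ F_{j+3}`, write `d̄ y = z + a x` with `z ∈ F_{j+1} ⊗ R` and `a ∈ R`. Applying `d̄` and
using `d̄² = 0` gives `a d̄ x = -d̄ z ∈ F_j ⊗ R`. As `R` is a domain and `(H ⧸ F_j) ⊗ R` is
torsion free, either `a = 0`, so `y ∈ F_{j+2}`, or `d̄ x ∈ F_j ⊗ R`, so `x ∈ F_{j+1}`.
Hence all jumps but the first and the last are at least two.
-/


open MvPolynomial TensorProduct

variable (k : Type*) [Field k] (r : ℕ)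
variable (H : Type*) [AddCommGroup H] [Module k H]

namespace Submodule

section Field

variable {K A V : Type*} [Field K] [CommRing A] [Algebra K A] [AddCommGroup V] [Module K V]

theorem mem_baseChange_iff_baseChange_mkQ_eq_zero {N : Submodule K V} {v : A ⊗[K] V} :
    v ∈ N.baseChange A ↔ N.mkQ.baseChange A v = 0 := by
  have := congrArg (fun P => v ∈ P) (lTensor_mkQ A N)
  simpa [baseChange, ← LinearMap.baseChange_eq_ltensor] using this.symm

theorem mem_baseChange_of_smul_mem [IsDomain A] {N : Submodule K V} {a : A} (ha : a ≠ 0)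
    {v : A ⊗[K] V} (hv : a • v ∈ N.baseChange A) : v ∈ N.baseChange A := by
  rw [mem_baseChange_iff_baseChange_mkQ_eq_zero, map_smul, smul_eq_zero_iff_right ha] at hv
  exact mem_baseChange_iff_baseChange_mkQ_eq_zero.mpr hv

end Field

section CommSemiring

variable {R A M : Type*} [CommSemiring R] [CommSemiring A] [Algebra R A] [AddCommMonoid M]
  [Module R M]

theorem baseChange_sup (p q : Submodule R M) :
    (p ⊔ q).baseChange A = p.baseChange A ⊔ q.baseChange A := by
  refine le_antisymm ?_ (sup_le (baseChange_mono A le_sup_left) (baseChange_mono A le_sup_right))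
  rw [baseChange_eq_span, span_le]
  rintro _ ⟨m, hm, rfl⟩
  obtain ⟨y, hy, z, hz, rfl⟩ := mem_sup.mp hm
  simp only [TensorProduct.mk_apply, tmul_add, SetLike.mem_coe]
  exact add_mem_sup (tmul_mem_baseChange_of_mem 1 hy) (tmul_mem_baseChange_of_mem 1 hz)

theorem mem_baseChange_sup_span_singleton {p : Submodule R M} {x : M} {v : A ⊗[R] M} :
    v ∈ (p ⊔ span R {x}).baseChange A ↔
      ∃ z ∈ p.baseChange A, ∃ a : A, z + a • (1 ⊗ₜ[R] x) = v := by
  simp [baseChange_sup, mem_sup, mem_span_singleton, eq_comm]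

theorem baseChange_le_comap_iff {B : Type*} [AddCommMonoid B] [Module A B] {p : Submodule R M}
    {Q : Submodule A B} (f : A ⊗[R] M →ₗ[A] B) :
    p.baseChange A ≤ Q.comap f ↔ ∀ m ∈ p, f (1 ⊗ₜ m) ∈ Q := by
  simp [baseChange_eq_span, span_le, Set.subset_def]

end CommSemiring

theorem exists_notMem_eq_sup_span_singleton_of_finrank_lt {K V : Type*} [DivisionRing K]
    [AddCommGroup V] [Module K V] [FiniteDimensional K V] {p q : Submodule K V} (hpq : p < q)
    (hdim : Module.finrank K q < Module.finrank K p + 2) :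
    ∃ x ∉ p, q = p ⊔ span K {x} := by
  obtain ⟨x, hxq, hxp⟩ := SetLike.exists_of_lt hpq
  have hlt : p < p ⊔ span K {x} :=
    left_lt_sup.mpr fun h => hxp (h (mem_span_singleton_self x))
  have hle : p ⊔ span K {x} ≤ q := sup_le hpq.le ((span_singleton_le_iff_mem x q).mpr hxq)
  refine ⟨x, hxp, (eq_of_le_of_finrank_le hle ?_).symm⟩
  have := finrank_lt_finrank_of_lt hlt
  omega

end Submodule

theorem Nat.two_mul_pred_le_of_lt_of_add_two_le {a : ℕ → ℕ} {L : ℕ}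
    (hlt : ∀ i < L, a i < a (i + 1)) (hgap : ∀ j, j + 2 < L → a (j + 1) + 2 ≤ a (j + 2)) :
    2 * (L - 1) ≤ a L := by
  have hbound : ∀ i < L, 2 * i ≤ a i + 1 := by
    intro i
    induction i with
    | zero => simp
    | succ i ih =>
      intro hi
      rcases i with _ | j
      · have := hlt 0 (by omega)
        omega
      · show 2 * (j + 2) ≤ a (j + 2) + 1
        have := ih (by omega)
        have := hgap j hi
        omega
  rcases L with _ | m
  · simp
  · have := hbound m (by omega)
    have := hlt m (by omega)
    omega

section Filtration

variable {k r H} {D : Rp k r ⊗[k] H →ₗ[Rp k r] Rp k r ⊗[k] H}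

theorem mem_FH_succ {i : ℕ} {x : H} :
    x ∈ FH k r H D (i + 1) ↔ D (1 ⊗ₜ[k] x) ∈ (FH k r H D i).baseChange (Rp k r) :=
  Iff.rfl

theorem baseChange_FH_succ_le_comap (i : ℕ) :
    (FH k r H D (i + 1)).baseChange (Rp k r) ≤ ((FH k r H D i).baseChange (Rp k r)).comap D :=
  (Submodule.baseChange_le_comap_iff D).mpr fun _ hx => mem_FH_succ.mp hx

theorem FH_monotone : Monotone (FH k r H D) := by
  refine monotone_nat_of_le_succ fun i => ?_
  induction i with
  | zero => exact bot_le
  | succ i ih => exact fun x hx => mem_FH_succ.mpr (Submodule.baseChange_mono _ ih hx)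

theorem FH_succ_eq_of_eq {i : ℕ} (h : FH k r H D i = FH k r H D (i + 1)) :
    FH k r H D (i + 1) = FH k r H D (i + 2) := by
  ext x
  rw [mem_FH_succ, mem_FH_succ, h]

theorem FH_lt_succ_of_lt_flen {i : ℕ} (hi : i < flen k r H D) :
    FH k r H D i < FH k r H D (i + 1) :=
  (FH_monotone (Nat.le_succ i)).lt_of_ne fun h => Nat.notMem_of_lt_sInf hi h

theorem FH_le_of_eq_sup_span_singleton (hDD : D ∘ₗ D = 0) {j : ℕ} {x : H}
    (hx : FH k r H D (j + 2) = FH k r H D (j + 1) ⊔ Submodule.span k {x})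
    (hx₁ : x ∉ FH k r H D (j + 1)) :
    FH k r H D (j + 3) ≤ FH k r H D (j + 2) := by
  intro y hy
  rw [mem_FH_succ, hx, Submodule.mem_baseChange_sup_span_singleton] at hy
  obtain ⟨z, hz, a, hDy⟩ := hy
  by_cases ha : a = 0
  · rw [mem_FH_succ, ← hDy, ha, zero_smul, add_zero]
    exact hz
  · refine absurd (mem_FH_succ.mpr (Submodule.mem_baseChange_of_smul_mem ha ?_)) hx₁
    have hDDy : D z + a • D (1 ⊗ₜ[k] x) = 0 := by
      rw [← map_smul, ← map_add, hDy, ← LinearMap.comp_apply, hDD, LinearMap.zero_apply]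
    rw [eq_neg_of_add_eq_zero_right hDDy]
    exact Submodule.neg_mem _ (baseChange_FH_succ_le_comap j hz)

theorem finrank_FH_add_two_le [FiniteDimensional k H] (hDD : D ∘ₗ D = 0) {j : ℕ}
    (hne : FH k r H D (j + 2) ≠ FH k r H D (j + 3)) :
    Module.finrank k (FH k r H D (j + 1)) + 2 ≤ Module.finrank k (FH k r H D (j + 2)) := by
  by_contra! hdim
  have hlt : FH k r H D (j + 1) < FH k r H D (j + 2) :=
    (FH_monotone (Nat.le_succ _)).lt_of_ne fun h => hne (FH_succ_eq_of_eq h)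
  obtain ⟨x, hx₁, hx⟩ := Submodule.exists_notMem_eq_sup_span_singleton_of_finrank_lt hlt hdim
  exact hne <|
    le_antisymm (FH_monotone (Nat.le_succ _)) (FH_le_of_eq_sup_span_singleton hDD hx hx₁)

end Filtration

theorem statement13_general (k : Type*) [Field k] (r : ℕ)
    (H : Type*) [AddCommGroup H] [Module k H]
    [FiniteDimensional k H]
    (D : Rp k r ⊗[k] H →ₗ[Rp k r] Rp k r ⊗[k] H)
    (hDD : D ∘ₗ D = 0) :
    2 * (flen k r H D - 1) ≤ Module.finrank k H :=
  calc 2 * (flen k r H D - 1) ≤ Module.finrank k (FH k r H D (flen k r H D)) :=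
        Nat.two_mul_pred_le_of_lt_of_add_two_le
          (fun _ hi => Submodule.finrank_lt_finrank_of_lt (FH_lt_succ_of_lt_flen hi))
          (fun _ hj => finrank_FH_add_two_le hDD (FH_lt_succ_of_lt_flen hj).ne)
    _ ≤ Module.finrank k H := Submodule.finrank_le _

theorem statement13 (k : Type*) [Field k] (r : ℕ)
    (H : Type*) [AddCommGroup H] [Module k H]
    [FiniteDimensional k H] [Nontrivial H]
    (g : ℤ → Submodule k H) (hg : DirectSum.IsInternal g)
    (D : Rp k r ⊗[k] H →ₗ[Rp k r] Rp k r ⊗[k] H)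
    (hDD : D ∘ₗ D = 0) (hdeg : DegreeOne k r H g D) (hmin : MinimalB k r H D) :
    2 * (flen k r H D - 1) ≤ Module.finrank k H :=
  statement13_general k r H D hDD
end

section
/- Let C̃ be a free differential R-module with a filtration 0 = F_0(C̃) ⊂ F_1(C̃) ⊂ ... ⊂ F_n(C̃) = C̃ by free differential submodules that are R-module direct summands and satisfy d(F_i(C̃)) ⊆ F_{i-1}(C̃), and suppose C̃ has an augmentation ε: C̃ → k (a morphism of differential modules, k with trivial differential) whose restriction to F_1(C̃) is surjective. Equip K_r(0) with the filtration by length of exterior products and the canonical augmentation. Then there exists a morphism of differential R-modules β: C̃ → K_r(0) that commutes with the respective augmentations and preserves the filtrations. -/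
/-!
Statement 15 (Proposition 4.2): let `C̃` be a free differential `R`-module
(`R = k[t₁,…,t_r]`) with a filtration `0 = F₀ ⊂ F₁ ⊂ … ⊂ F_n = C̃` by free differential
submodules that are `R`-module direct summands and satisfy `d(F_i) ⊆ F_{i-1}` (a free
differential flag), with an augmentation `ε : C̃ → k` (a morphism of differential modules,
`k` with trivial differential, `R` acting through the augmentation `tᵢ ↦ 0`) whose
restriction to `F₁` is surjective.  Equip `K_r(0)` with the filtration by length of
exterior products (`i`-th stage: exterior products of at most `i-1` generators) and the
canonical augmentation `f ↦ constant coefficient of f(∅)`.  Then there is a morphism of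
differential `R`-modules `β : C̃ → K_r(0)` commuting with the augmentations and preserving
the filtrations.  The Koszul complex `K_r(0)` is modelled as in Statement 0.
-/

open MvPolynomial

/-- The underlying `R`-module of the Koszul complex `K_r(m)`. -/
abbrev Kmod (k : Type*) [Field k] (r : ℕ) := Finset (Fin r) → MvPolynomial (Fin r) k

/-- Basis element corresponding to the exterior monomial `⋀_{i ∈ S} sᵢ`. -/
noncomputable def eK (k : Type*) [Field k] {r : ℕ} (S : Finset (Fin r)) : Kmod k r :=
  Pi.single S 1

/-- The Koszul differential of `K_r(m)`. -/
noncomputable def koszulD (k : Type*) [Field k] (r m : ℕ) :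
    Kmod k r →ₗ[MvPolynomial (Fin r) k] Kmod k r :=
  LinearMap.pi fun S => ∑ i ∈ Sᶜ,
    (((-1 : MvPolynomial (Fin r) k) ^ (S.filter (fun j => j < i)).card) * X i ^ (m + 1)) •
      LinearMap.proj (insert i S)

/-- The filtration of `K_r(0)` by length of exterior products: the `i`-th stage is
generated by the exterior products of at most `i-1` of the generators. -/
noncomputable def KFil (k : Type*) [Field k] (r : ℕ) (i : ℕ) : Submodule (Rp k r) (Kmod k r) :=
  Submodule.span (Rp k r) {f : Kmod k r | ∃ S : Finset (Fin r), S.card + 1 ≤ i ∧ f = eK k S}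

/-!
The Koszul complex `K_r(0)` is a resolution of `k`, with an explicit `k`-linear contracting
homotopy `H` satisfying `dH + Hd = id - (augmentation)`. Since `H` raises the length
filtration by one, a cycle in the `i`-th stage with zero augmentation is the boundary of an
element of the `(i+1)`-st stage with any prescribed augmentation. Hence `β` can be built stage
by stage: if `β` is already compatible on `F_i`, projectivity of `C̃` lifts
`z ↦ (β (d z), ε z)`, restricted to `F_{i+1}`, along `(d, ε)` on the `(i+1)`-st stage of
`K_r(0)`; this lift is used on a complement of `F_i`.
-/

lemma Finset.min'_insert_of_forall_lt {α : Type*} [LinearOrder α] {S : Finset α} {m : α}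
    (hS : ∀ s ∈ S, m < s) : (insert m S).min' (insert_nonempty m S) = m :=
  le_antisymm (min'_le _ _ (mem_insert_self m S)) <|
    le_min' _ _ _ fun y hy => (mem_insert.mp hy).elim ge_of_eq fun hy => (hS y hy).le

section LeastVar

variable {σ : Type*} [LinearOrder σ]

def IsLeastVar (a : σ →₀ ℕ) (m : σ) : Prop :=
  a m ≠ 0 ∧ ∀ j < m, a j = 0

lemma IsLeastVar.unique {a : σ →₀ ℕ} {m m' : σ} (h : IsLeastVar a m)
    (h' : IsLeastVar a m') : m = m' := by
  rcases lt_trichotomy m m' with hlt | heq | hgt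
  · exact absurd (h'.2 m hlt) h.1
  · exact heq
  · exact absurd (h.2 m' hgt) h'.1

lemma exists_isLeastVar {a : σ →₀ ℕ} (ha : a ≠ 0) : ∃ m, IsLeastVar a m := by
  have hsupp : a.support.Nonempty := Finsupp.support_nonempty_iff.mpr ha
  refine ⟨a.support.min' hsupp, Finsupp.mem_support_iff.mp (a.support.min'_mem hsupp),
    fun j hj => ?_⟩
  by_contra hja
  exact absurd (a.support.min'_le j (Finsupp.mem_support_iff.mpr hja)) (not_le.mpr hj)

lemma isLeastVar_add_single {a : σ →₀ ℕ} {m i : σ} (hlow : ∀ j < m, a j = 0)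
    (hm : a m ≠ 0 ∨ i = m) (hmi : m ≤ i) : IsLeastVar (a + Finsupp.single i 1) m := by
  refine ⟨?_, fun j hj => ?_⟩
  · rcases hm with hm | rfl
    · simp [hm]
    · simp
  · simp [hlow j hj, (hj.trans_le hmi).ne']


variable {R : Type*} [CommSemiring R]

open scoped Classical in
/-- Divides by `t m` the monomials whose least variable is `t m`, and kills the others. -/
noncomputable def divLeastVar (m : σ) : MvPolynomial σ R →ₗ[R] MvPolynomial σ R :=
  Finsupp.lsum R (fun a : σ →₀ ℕ =>
      if IsLeastVar a m then (monomial (a - Finsupp.single m 1) : R →ₗ[R] MvPolynomial σ R)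
      else 0) ∘ₗ
    (AddMonoidAlgebra.coeffLinearEquiv R).toLinearMap

open scoped Classical in
lemma divLeastVar_monomial (m : σ) (a : σ →₀ ℕ) (c : R) :
    divLeastVar m (monomial a c : MvPolynomial σ R) =
      if IsLeastVar a m then monomial (a - Finsupp.single m 1) c else 0 := by
  have hcoeff : (AddMonoidAlgebra.coeffLinearEquiv R).toLinearMap (monomial a c) =
      Finsupp.single a c := by
    ext b
    change coeff b (monomial a c) = _
    simp [coeff_monomial, Finsupp.single_apply]
  rw [divLeastVar, LinearMap.comp_apply, hcoeff, Finsupp.lsum_single]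
  split_ifs <;> rfl

end LeastVar

section KoszulHomotopy

variable {k : Type*} [Field k] {r : ℕ}

lemma koszulD_apply (f : Kmod k r) (S : Finset (Fin r)) :
    koszulD k r 0 f S =
      ∑ i ∈ Sᶜ, ((-1 : Rp k r) ^ (S.filter (· < i)).card * X i) * f (insert i S) := by
  simp [koszulD, LinearMap.pi_apply, LinearMap.sum_apply, smul_eq_mul]

lemma koszulD_single_monomial (T : Finset (Fin r)) (a : Fin r →₀ ℕ) (c : k) :
    koszulD k r 0 (Pi.single T (monomial a c)) = ∑ i ∈ T, Pi.single (T.erase i)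
      (monomial (a + Finsupp.single i 1) ((-1) ^ ((T.erase i).filter (· < i)).card * c)) := by
  classical
  funext U
  rw [koszulD_apply, Finset.sum_apply]
  simp only [Pi.single_apply, mul_ite, mul_zero]
  rw [← Finset.sum_filter, ← Finset.sum_filter]
  refine Finset.sum_nbij' id id (fun i hi => ?_) (fun i hi => ?_) (fun _ _ => rfl)
    (fun _ _ => rfl) (fun i hi => ?_)
  · simp only [Finset.mem_filter, Finset.mem_compl] at hi ⊢
    obtain ⟨hiU, rfl⟩ := hi
    exact ⟨Finset.mem_insert_self i U, (Finset.erase_insert hiU).symm⟩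
  · simp only [Finset.mem_filter, Finset.mem_compl] at hi ⊢
    obtain ⟨hiT, rfl⟩ := hi
    exact ⟨Finset.notMem_erase i T, Finset.insert_erase hiT⟩
  · simp only [Finset.mem_filter, Finset.mem_compl] at hi
    obtain ⟨hiU, rfl⟩ := hi
    rw [id, Finset.erase_insert hiU, X, mul_assoc, monomial_mul, one_mul, add_comm,
      ← C_mul_monomial, map_pow, map_neg, map_one]

/-- The contracting homotopy of `K_r(0)`: `H (t ^ a e_S) = t ^ (a - e_m) e_{insert m S}` when
`t m` is the least variable of `t ^ a` and `m < min S`, and `H (t ^ a e_S) = 0` otherwise. -/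
noncomputable def koszulHomotopy (k : Type*) [Field k] (r : ℕ) : Kmod k r →ₗ[k] Kmod k r :=
  LinearMap.pi fun T => if hT : T.Nonempty then
    divLeastVar (T.min' hT) ∘ₗ LinearMap.proj (T.erase (T.min' hT)) else 0

lemma koszulHomotopy_apply (f : Kmod k r) {T : Finset (Fin r)} (hT : T.Nonempty) :
    koszulHomotopy k r f T = divLeastVar (T.min' hT) (f (T.erase (T.min' hT))) := by
  simp [koszulHomotopy, dif_pos hT]

lemma koszulHomotopy_apply_empty (f : Kmod k r) : koszulHomotopy k r f ∅ = 0 := by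
  simp [koszulHomotopy]

lemma koszulHomotopy_single_monomial {S : Finset (Fin r)} {a : Fin r →₀ ℕ} (c : k) {m : Fin r}
    (ha : IsLeastVar a m) (hS : ∀ s ∈ S, m < s) :
    koszulHomotopy k r (Pi.single S (monomial a c)) =
      Pi.single (insert m S) (monomial (a - Finsupp.single m 1) c) := by
  classical
  have hmS : m ∉ S := fun h => lt_irrefl m (hS m h)
  funext T
  by_cases hTm : T = insert m S
  · subst hTm
    rw [koszulHomotopy_apply _ (Finset.insert_nonempty m S), Finset.min'_insert_of_forall_lt hS,
      Finset.erase_insert hmS, Pi.single_eq_same, Pi.single_eq_same, divLeastVar_monomial,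
      if_pos ha]
  rw [Pi.single_eq_of_ne hTm]
  rcases Finset.eq_empty_or_nonempty T with rfl | hT
  · exact koszulHomotopy_apply_empty _
  rw [koszulHomotopy_apply _ hT]
  by_cases hTS : T.erase (T.min' hT) = S
  · rw [hTS, Pi.single_eq_same, divLeastVar_monomial, if_neg]
    intro hleast
    rw [← hTS, ha.unique hleast, Finset.insert_erase (T.min'_mem hT)] at hTm
    exact hTm rfl
  · rw [Pi.single_eq_of_ne hTS, map_zero]

lemma koszulHomotopy_single_monomial_eq_zero {S : Finset (Fin r)} {a : Fin r →₀ ℕ} (c : k)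
    (h : ∀ m, IsLeastVar a m → ∃ s ∈ S, s ≤ m) :
    koszulHomotopy k r (Pi.single S (monomial a c)) = 0 := by
  classical
  funext T
  rcases Finset.eq_empty_or_nonempty T with rfl | hT
  · exact koszulHomotopy_apply_empty _
  rw [koszulHomotopy_apply _ hT]
  by_cases hTS : T.erase (T.min' hT) = S
  · rw [hTS, Pi.single_eq_same, divLeastVar_monomial, if_neg]
    · rfl
    intro hleast
    obtain ⟨s, hsS, hsm⟩ := h _ hleast
    rw [← hTS] at hsS
    exact Finset.ne_of_mem_erase hsS (le_antisymm hsm (T.min'_le s (Finset.mem_of_mem_erase hsS)))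
  · rw [Pi.single_eq_of_ne hTS, map_zero]
    rfl

lemma koszulHomotopy_spec_of_isLeastVar {S : Finset (Fin r)} {a : Fin r →₀ ℕ} (c : k)
    {m : Fin r} (ha : IsLeastVar a m) (hS : ∀ s ∈ S, m < s) :
    koszulD k r 0 (koszulHomotopy k r (Pi.single S (monomial a c))) +
      koszulHomotopy k r (koszulD k r 0 (Pi.single S (monomial a c))) =
      Pi.single S (monomial a c) := by
  classical
  have hmS : m ∉ S := fun h => lt_irrefl m (hS m h)
  have hle : Finsupp.single m 1 ≤ a := Finsupp.single_le_iff.mpr (Nat.one_le_iff_ne_zero.mpr ha.1)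
  have hfilter : S.filter (· < m) = ∅ :=
    Finset.filter_eq_empty_iff.mpr fun s hs => not_lt.mpr (hS s hs).le
  rw [koszulHomotopy_single_monomial c ha hS, koszulD_single_monomial, koszulD_single_monomial,
    map_sum, Finset.sum_insert hmS, Finset.erase_insert hmS, tsub_add_cancel_of_le hle, hfilter,
    Finset.card_empty, pow_zero, one_mul, add_assoc, ← Finset.sum_add_distrib,
    Finset.sum_eq_zero, add_zero]
  intro i hi
  have hmi : m ≠ i := (hS i hi).ne
  have herase : (insert m S).erase i = insert m (S.erase i) := Finset.erase_insert_of_ne hmi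
  -- moving `t m` past `t i` costs one sign, so the two terms cancel
  have hcard : ((insert m (S.erase i)).filter (· < i)).card =
      ((S.erase i).filter (· < i)).card + 1 := by
    rw [Finset.filter_insert, if_pos (hS i hi), Finset.card_insert_of_notMem]
    exact fun h => hmS (Finset.mem_of_mem_erase (Finset.mem_of_mem_filter _ h))
  rw [koszulHomotopy_single_monomial _ (isLeastVar_add_single ha.2 (Or.inl ha.1) (hS i hi).le)
      fun s hs => hS s (Finset.mem_of_mem_erase hs),
    herase, hcard, tsub_add_eq_add_tsub hle, ← Pi.single_add, ← map_add, pow_succ]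
  simp

lemma koszulHomotopy_spec_of_lt_min' {S : Finset (Fin r)} (hS : S.Nonempty) {a : Fin r →₀ ℕ}
    (c : k) (ha : ∀ j < S.min' hS, a j = 0) :
    koszulD k r 0 (koszulHomotopy k r (Pi.single S (monomial a c))) +
      koszulHomotopy k r (koszulD k r 0 (Pi.single S (monomial a c))) =
      Pi.single S (monomial a c) := by
  classical
  set s₁ := S.min' hS
  have hs₁ : s₁ ∈ S := S.min'_mem hS
  rw [koszulHomotopy_single_monomial_eq_zero c
      fun m hm => ⟨s₁, hs₁, not_lt.mp fun h => hm.1 (ha m h)⟩,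
    map_zero, zero_add, koszulD_single_monomial, map_sum, Finset.sum_eq_single_of_mem s₁ hs₁]
  · have hfilter : (S.erase s₁).filter (· < s₁) = ∅ :=
      Finset.filter_eq_empty_iff.mpr fun s hs =>
        not_lt.mpr (S.min'_le s (Finset.mem_of_mem_erase hs))
    rw [koszulHomotopy_single_monomial _ (isLeastVar_add_single ha (Or.inr rfl) le_rfl)
        fun s hs => lt_of_le_of_ne (S.min'_le s (Finset.mem_of_mem_erase hs))
          (Finset.ne_of_mem_erase hs).symm,
      Finset.insert_erase hs₁, add_tsub_cancel_right, hfilter, Finset.card_empty, pow_zero,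
      one_mul]
  · intro i hi hne
    refine koszulHomotopy_single_monomial_eq_zero _ fun m hm =>
      ⟨s₁, Finset.mem_erase.mpr ⟨Ne.symm hne, hs₁⟩, not_lt.mp fun hms => hm.1 ?_⟩
    simp [ha m hms, (hms.trans_le (S.min'_le i hi)).ne']

lemma koszulHomotopy_spec_single_monomial (S : Finset (Fin r)) (a : Fin r →₀ ℕ) (c : k) :
    koszulD k r 0 (koszulHomotopy k r (Pi.single S (monomial a c))) +
      koszulHomotopy k r (koszulD k r 0 (Pi.single S (monomial a c))) =
      Pi.single S (monomial a c) -
        Pi.single (∅ : Finset (Fin r))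
          (C (constantCoeff ((Pi.single S (monomial a c) : Kmod k r) ∅))) := by
  classical
  by_cases h0 : S = ∅ ∧ a = 0
  · obtain ⟨rfl, rfl⟩ := h0
    rw [koszulHomotopy_single_monomial_eq_zero c fun m hm => absurd rfl hm.1,
      koszulD_single_monomial, Finset.sum_empty, map_zero, map_zero, add_zero,
      Pi.single_eq_same, constantCoeff_monomial, if_pos rfl, ← monomial_zero', sub_self]
  have hcc : constantCoeff ((Pi.single S (monomial a c) : Kmod k r) ∅) = 0 := by
    by_cases hS : S = ∅
    · subst hS
      rw [Pi.single_eq_same, constantCoeff_monomial, if_neg fun ha => h0 ⟨rfl, ha⟩]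
    · rw [Pi.single_eq_of_ne (Ne.symm hS), map_zero]
  rw [hcc, map_zero, Pi.single_zero, sub_zero]
  rcases Finset.eq_empty_or_nonempty S with rfl | hS
  · obtain ⟨m, hm⟩ := exists_isLeastVar fun ha => h0 ⟨rfl, ha⟩
    exact koszulHomotopy_spec_of_isLeastVar c hm fun s hs => absurd hs (Finset.notMem_empty s)
  by_cases hlow : ∀ j < S.min' hS, a j = 0
  · exact koszulHomotopy_spec_of_lt_min' hS c hlow
  push Not at hlow
  obtain ⟨j, hjS, hj⟩ := hlow
  obtain ⟨m, hm⟩ := exists_isLeastVar fun ha : a = 0 => hj (by rw [ha]; rfl)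
  exact koszulHomotopy_spec_of_isLeastVar c hm fun s hs =>
    (not_lt.mp fun h => hj (hm.2 j h)).trans_lt (hjS.trans_le (S.min'_le s hs))

lemma koszulD_koszulHomotopy_add (f : Kmod k r) :
    koszulD k r 0 (koszulHomotopy k r f) + koszulHomotopy k r (koszulD k r 0 f) =
      f - Pi.single (∅ : Finset (Fin r)) (C (constantCoeff (f ∅))) := by
  classical
  let aug : Kmod k r →ₗ[k] Kmod k r := LinearMap.single k (fun _ => Rp k r) ∅ ∘ₗ
    Algebra.linearMap k (Rp k r) ∘ₗ lcoeff k 0 ∘ₗ LinearMap.proj ∅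
  suffices h : (koszulD k r 0).restrictScalars k ∘ₗ koszulHomotopy k r +
      koszulHomotopy k r ∘ₗ (koszulD k r 0).restrictScalars k = LinearMap.id - aug by
    simpa [aug, constantCoeff_eq] using LinearMap.congr_fun h f
  refine LinearMap.pi_ext' fun S => linearMap_ext fun a => LinearMap.ext_ring ?_
  simpa [aug, constantCoeff_eq] using koszulHomotopy_spec_single_monomial S a (1 : k)

end KoszulHomotopy

section KoszulFiltration

variable {k : Type*} [Field k] {r : ℕ}

lemma mem_KFil_iff {i : ℕ} {f : Kmod k r} :
    f ∈ KFil k r i ↔ ∀ S : Finset (Fin r), i ≤ S.card → f S = 0 := by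
  classical
  constructor
  · intro hf S hS
    induction hf using Submodule.span_induction with
    | mem g hg =>
      obtain ⟨T, hT, rfl⟩ := hg
      exact Pi.single_eq_of_ne (by rintro rfl; omega) _
    | zero => rfl
    | add g h _ _ hg hh => rw [Pi.add_apply, hg, hh, add_zero]
    | smul q g _ hg => rw [Pi.smul_apply, hg, smul_zero]
  · intro hf
    rw [← Finset.univ_sum_single f]
    refine Submodule.sum_mem _ fun S _ => ?_
    by_cases hS : S.card + 1 ≤ i
    · rw [← mul_one (f S), ← smul_eq_mul, Pi.single_smul]
      exact Submodule.smul_mem _ _ (Submodule.subset_span ⟨S, hS, rfl⟩)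
    · rw [hf S (by omega), Pi.single_zero]
      exact Submodule.zero_mem _

lemma KFil_mono {i j : ℕ} (h : i ≤ j) : KFil k r i ≤ KFil k r j :=
  Submodule.span_mono fun _ ⟨S, hS, hf⟩ => ⟨S, hS.trans h, hf⟩

lemma koszulD_mem_KFil {i : ℕ} {f : Kmod k r} (hf : f ∈ KFil k r (i + 1)) :
    koszulD k r 0 f ∈ KFil k r i := by
  refine mem_KFil_iff.mpr fun S hS => ?_
  rw [koszulD_apply]
  refine Finset.sum_eq_zero fun j hj => ?_
  rw [mem_KFil_iff.mp hf _ (by rw [Finset.card_insert_of_notMem (Finset.mem_compl.mp hj)]; omega),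
    mul_zero]

lemma koszulHomotopy_mem_KFil {i : ℕ} {f : Kmod k r} (hf : f ∈ KFil k r i) :
    koszulHomotopy k r f ∈ KFil k r (i + 1) := by
  refine mem_KFil_iff.mpr fun S hS => ?_
  rcases Finset.eq_empty_or_nonempty S with rfl | hne
  · exact koszulHomotopy_apply_empty f
  rw [koszulHomotopy_apply _ hne, mem_KFil_iff.mp hf, map_zero]
  rw [Finset.card_erase_of_mem (S.min'_mem hne)]
  omega

lemma single_empty_mem_KFil {i : ℕ} (hi : 1 ≤ i) (q : Rp k r) :
    (Pi.single ∅ q : Kmod k r) ∈ KFil k r i :=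
  mem_KFil_iff.mpr fun S hS => Pi.single_eq_of_ne (by rintro rfl; simp at hS; omega) _

lemma exists_mem_KFil_koszulD_eq {i : ℕ} {y : Kmod k r} (hy : y ∈ KFil k r i)
    (hdy : koszulD k r 0 y = 0) (hy₀ : constantCoeff (y ∅) = 0) (c : k) :
    ∃ x ∈ KFil k r (i + 1), koszulD k r 0 x = y ∧ constantCoeff (x ∅) = c := by
  refine ⟨koszulHomotopy k r y + Pi.single (∅ : Finset (Fin r)) (C c),
    add_mem (koszulHomotopy_mem_KFil hy) (single_empty_mem_KFil (Nat.le_add_left 1 i) _), ?_, ?_⟩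
  · have hH := koszulD_koszulHomotopy_add y
    rw [hdy, hy₀, map_zero, map_zero, Pi.single_zero, sub_zero, add_zero] at hH
    rw [map_add, hH, add_eq_left]
    funext S
    simp [koszulD_apply]
  · simp [koszulHomotopy_apply_empty]

end KoszulFiltration

theorem Module.Projective.exists_comp_eq_of_range_le {R P N Q : Type*} [Semiring R]
    [AddCommMonoid P] [Module R P] [Module.Projective R P] [AddCommMonoid N] [Module R N]
    [AddCommMonoid Q] [Module R Q] (φ : N →ₗ[R] Q) (ψ : P →ₗ[R] Q)
    (h : LinearMap.range ψ ≤ LinearMap.range φ) : ∃ g : P →ₗ[R] N, φ ∘ₗ g = ψ := by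
  obtain ⟨g, hg⟩ := Module.projective_lifting_property φ.rangeRestrict
    (ψ.codRestrict _ fun x => h ⟨x, rfl⟩) φ.surjective_rangeRestrict
  exact ⟨g, LinearMap.ext fun x => congrArg Subtype.val (LinearMap.congr_fun hg x)⟩

noncomputable abbrev augModule (k : Type*) [Field k] (r : ℕ) : Module (Rp k r) k :=
  Module.compHom k (constantCoeff : Rp k r →+* k)

section Lifting

attribute [local instance] augModule

variable {k : Type*} [Field k] {r : ℕ}

noncomputable def koszulAug (k : Type*) [Field k] (r : ℕ) : Kmod k r →ₗ[Rp k r] k where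
  toFun f := constantCoeff (f ∅)
  map_add' f g := map_add constantCoeff (f ∅) (g ∅)
  map_smul' q f := map_mul constantCoeff q (f ∅)

variable {M : Type*} [AddCommGroup M] [Module (Rp k r) M]
  (D : M →ₗ[Rp k r] M) (ε : M →ₗ[Rp k r] k) (F : ℕ → Submodule (Rp k r) M)

structure IsFlagMapUpTo (β : M →ₗ[Rp k r] Kmod k r) (i : ℕ) : Prop where
  map_D : ∀ z ∈ F i, β (D z) = koszulD k r 0 (β z)
  aug : ∀ z ∈ F i, constantCoeff (β z ∅) = ε z
  map_le : ∀ j ≤ i, (F j).map β ≤ KFil k r j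

variable {D ε F}

lemma isFlagMapUpTo_zero (hF0 : F 0 = ⊥) : IsFlagMapUpTo D ε F 0 0 where
  map_D z _ := by simp
  aug z hz := by rw [hF0, Submodule.mem_bot] at hz; simp [hz]
  map_le j hj := by simp

lemma IsFlagMapUpTo.exists_extension [Module.Projective (Rp k r) M] (hDD : D ∘ₗ D = 0)
    (hεD : ε ∘ₗ D = 0) {β : M →ₗ[Rp k r] Kmod k r} {i : ℕ}
    (hβ : IsFlagMapUpTo D ε F β i) (hdF : (F (i + 1)).map D ≤ F i)
    {G : Submodule (Rp k r) M} (hG : IsCompl (F (i + 1)) G) :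
    ∃ γ : M →ₗ[Rp k r] Kmod k r, (∀ u ∈ F (i + 1),
      koszulD k r 0 (γ u) = β (D u) ∧ constantCoeff (γ u ∅) = ε u) ∧
      ∀ u, γ u ∈ KFil k r (i + 1) := by
  let p := (F (i + 1)).projection G hG
  have hDp (z : M) : D (p z) ∈ F i := hdF ⟨p z, Submodule.projection_apply_mem hG z, rfl⟩
  let Φ := (koszulD k r 0).prod (koszulAug k r) ∘ₗ (KFil k r (i + 1)).subtype
  let Ψ := ((β ∘ₗ D).prod ε) ∘ₗ p
  have hrange : LinearMap.range Ψ ≤ LinearMap.range Φ := by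
    rintro _ ⟨z, rfl⟩
    have hcycle : koszulD k r 0 (β (D (p z))) = 0 := by
      rw [← hβ.map_D _ (hDp z), show D (D (p z)) = 0 from LinearMap.congr_fun hDD _, map_zero]
    have haug : constantCoeff (β (D (p z)) ∅) = 0 := by
      rw [hβ.aug _ (hDp z)]
      exact LinearMap.congr_fun hεD (p z)
    obtain ⟨x, hx, hdx, hax⟩ := exists_mem_KFil_koszulD_eq
      (hβ.map_le i le_rfl ⟨_, hDp z, rfl⟩) hcycle haug (ε (p z))
    exact ⟨⟨x, hx⟩, Prod.ext hdx hax⟩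
  obtain ⟨g, hg⟩ := Module.Projective.exists_comp_eq_of_range_le Φ Ψ hrange
  refine ⟨(KFil k r (i + 1)).subtype ∘ₗ g, fun u hu => ?_, fun u => (g u).2⟩
  have hgu := LinearMap.congr_fun hg u
  simp only [Φ, Ψ, p, LinearMap.comp_apply, LinearMap.prod_apply,
    Function.prod, Submodule.projection_apply_of_mem_left hG hu, Prod.mk.injEq] at hgu
  exact hgu

lemma IsFlagMapUpTo.succ [Module.Projective (Rp k r) M] (hDD : D ∘ₗ D = 0)
    (hεD : ε ∘ₗ D = 0) (hF : Monotone F)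
    (hcompl : ∀ i, ∃ G : Submodule (Rp k r) M, IsCompl (F i) G)
    {β : M →ₗ[Rp k r] Kmod k r} {i : ℕ} (hβ : IsFlagMapUpTo D ε F β i)
    (hdF : (F (i + 1)).map D ≤ F i) :
    ∃ β' : M →ₗ[Rp k r] Kmod k r, IsFlagMapUpTo D ε F β' (i + 1) := by
  obtain ⟨G, hG⟩ := hcompl i
  obtain ⟨G', hG'⟩ := hcompl (i + 1)
  obtain ⟨γ, hγ, hγF⟩ := hβ.exists_extension hDD hεD hdF hG'
  let π := (F i).projection G hG
  have hπ (z : M) : π z ∈ F i := Submodule.projection_apply_mem hG z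
  have hsub {z : M} (hz : z ∈ F (i + 1)) : z - π z ∈ F (i + 1) :=
    sub_mem hz (hF i.le_succ (hπ z))
  let β' := β ∘ₗ π + γ ∘ₗ (LinearMap.id - π)
  have hβ' (z : M) : β' z = β (π z) + γ (z - π z) := rfl
  have hβ'_of_mem {z : M} (hz : z ∈ F i) : β' z = β z := by
    rw [hβ', Submodule.projection_apply_of_mem_left hG hz, sub_self, map_zero, add_zero]
  refine ⟨β', ⟨fun z hz => ?_, fun z hz => ?_, fun j hj => ?_⟩⟩
  · rw [hβ'_of_mem (hdF ⟨z, hz, rfl⟩), hβ', map_add, ← hβ.map_D _ (hπ z),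
      (hγ _ (hsub hz)).1, ← map_add, ← map_add, add_sub_cancel]
  · rw [hβ', Pi.add_apply, map_add, hβ.aug _ (hπ z), (hγ _ (hsub hz)).2, ← map_add,
      add_sub_cancel]
  · rintro _ ⟨z, hz, rfl⟩
    obtain hj | rfl := hj.lt_or_eq
    · have hji : j ≤ i := Nat.lt_succ_iff.mp hj
      rw [hβ'_of_mem (hF hji hz)]
      exact hβ.map_le j hji ⟨z, hz, rfl⟩
    · exact add_mem (KFil_mono i.le_succ (hβ.map_le i le_rfl ⟨_, hπ z, rfl⟩)) (hγF _)

lemma exists_isFlagMapUpTo [Module.Projective (Rp k r) M] (hDD : D ∘ₗ D = 0)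
    (hεD : ε ∘ₗ D = 0) (hF : Monotone F) (hF0 : F 0 = ⊥)
    (hcompl : ∀ i, ∃ G : Submodule (Rp k r) M, IsCompl (F i) G)
    (hdF : ∀ i, (F (i + 1)).map D ≤ F i) (i : ℕ) :
    ∃ β : M →ₗ[Rp k r] Kmod k r, IsFlagMapUpTo D ε F β i := by
  induction i with
  | zero => exact ⟨0, isFlagMapUpTo_zero hF0⟩
  | succ i ih =>
    obtain ⟨β, hβ⟩ := ih
    exact hβ.succ hDD hεD hF hcompl (hdF i)

end Lifting

theorem statement15_general (k : Type*) [Field k] (r : ℕ)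
    (M : Type*) [AddCommGroup M] [Module k M] [Module (Rp k r) M]
    [IsScalarTower k (Rp k r) M] [Module.Free (Rp k r) M]
    -- the differential
    (D : M →ₗ[Rp k r] M) (hDD : D ∘ₗ D = 0)
    -- the filtration 0 = F₀ ⊂ F₁ ⊂ … ⊂ F_n = C̃
    (F : ℕ → Submodule (Rp k r) M) (n : ℕ)
    (hF0 : F 0 = ⊥) (hFtop : ∀ i, n ≤ i → F i = ⊤)
    (hFlt : ∀ i, i < n → F i < F (i + 1))
    -- by free differential submodules that are R-module direct summands
    (hcompl : ∀ i, ∃ G : Submodule (Rp k r) M, IsCompl (F i) G)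
    (hdF : ∀ i, (F (i + 1)).map D ≤ F i)
    -- the augmentation ε : C̃ → k, a morphism of differential modules (trivial
    -- differential on k, R acting on k through tᵢ ↦ 0), surjective on F₁
    (ε : M →ₗ[k] k)
    (hεd : ε ∘ₗ (D.restrictScalars k) = 0)
    (hεsl : ∀ (q : Rp k r) (z : M), ε (q • z) = constantCoeff q * ε z) :
    ∃ β : M →ₗ[Rp k r] Kmod k r,
      -- β is a morphism of differential R-modules …
      β ∘ₗ D = koszulD k r 0 ∘ₗ β ∧
      -- … commuting with the augmentations …
      (∀ z : M, constantCoeff (β z ∅) = ε z) ∧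
      -- … and preserving the filtrations
      (∀ i, (F i).map β ≤ KFil k r i) := by
  have hF : Monotone F := monotone_nat_of_le_succ fun i => by
    rcases lt_or_ge i n with h | h
    · exact (hFlt i h).le
    · rw [hFtop i h, hFtop (i + 1) (h.trans i.le_succ)]
  let _ := augModule k r
  let εR : M →ₗ[Rp k r] k := { ε.toAddMonoidHom with map_smul' := hεsl }
  have hεD : εR ∘ₗ D = 0 := LinearMap.ext fun z => LinearMap.congr_fun hεd z
  obtain ⟨β, hβ⟩ := exists_isFlagMapUpTo hDD hεD hF hF0 hcompl hdF n
  have hFn (z : M) : z ∈ F n := by simp [hFtop n le_rfl]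
  refine ⟨β, LinearMap.ext fun z => hβ.map_D z (hFn z), fun z => hβ.aug z (hFn z),
    fun i => ?_⟩
  rcases le_or_gt i n with hi | hi
  · exact hβ.map_le i hi
  · rw [hFtop i hi.le, ← hFtop n le_rfl]
    exact (hβ.map_le n le_rfl).trans (KFil_mono hi.le)

theorem statement15 (k : Type*) [Field k] (r : ℕ)
    (M : Type*) [AddCommGroup M] [Module k M] [Module (Rp k r) M]
    [IsScalarTower k (Rp k r) M] [Module.Free (Rp k r) M]
    -- the differential
    (D : M →ₗ[Rp k r] M) (hDD : D ∘ₗ D = 0)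
    -- the filtration 0 = F₀ ⊂ F₁ ⊂ … ⊂ F_n = C̃
    (F : ℕ → Submodule (Rp k r) M) (n : ℕ)
    (hF0 : F 0 = ⊥) (hFtop : ∀ i, n ≤ i → F i = ⊤)
    (hFlt : ∀ i, i < n → F i < F (i + 1))
    -- by free differential submodules that are R-module direct summands
    (hfree : ∀ i, Module.Free (Rp k r) (F i))
    (hcompl : ∀ i, ∃ G : Submodule (Rp k r) M, IsCompl (F i) G)
    (hdF : ∀ i, (F (i + 1)).map D ≤ F i)
    -- the augmentation ε : C̃ → k, a morphism of differential modules (trivial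
    -- differential on k, R acting on k through tᵢ ↦ 0), surjective on F₁
    (ε : M →ₗ[k] k)
    (hεd : ε ∘ₗ (D.restrictScalars k) = 0)
    (hεsl : ∀ (q : Rp k r) (z : M), ε (q • z) = constantCoeff q * ε z)
    (hεsurj : ∀ c : k, ∃ z ∈ F 1, ε z = c) :
    ∃ β : M →ₗ[Rp k r] Kmod k r,
      -- β is a morphism of differential R-modules …
      β ∘ₗ D = koszulD k r 0 ∘ₗ β ∧
      -- … commuting with the augmentations …
      (∀ z : M, constantCoeff (β z ∅) = ε z) ∧
      -- … and preserving the filtrations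
      (∀ i, (F i).map β ≤ KFil k r i) :=
  statement15_general k r M D hDD F n hF0 hFtop hFlt hcompl hdF ε hεd hεsl
end
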